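/- arXiv:2605.31261 — 4 statements merged into one kernel-verified Lean document; each statement's English description precedes it below -/
import Mathlib

section
/- Let T ∈ ℝ^{N×N} be a column-stochastic matrix each of whose columns is a canonical basis vector (a deterministic transition matrix), and suppose the corresponding function on states {1,…,N} has r transient states. Then, after relabeling the states so the transient states come first, T has block form T = [[T₁₁, 0],[T₂₁, P]] where T₁₁ ∈ ℝ^{r×r} is strictly lower-triangular (hence nilpotent), T₂₁ ∈ ℝ^{(N−r)×r} is nonzero if r ≠ 0, and P ∈ ℝ^{(N−r)×(N−r)} is a permutation matrix. -/
open Classical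

namespace DetBlockAux
variable {N : ℕ}

def IsRec (f : Fin N → Fin N) (x : Fin N) : Prop := ∃ k, 0 < k ∧ f^[k] x = x

lemma not_isRec_iff (f : Fin N → Fin N) (x : Fin N) :
    ¬ IsRec f x ↔ ∀ k : ℕ, 0 < k → f^[k] x ≠ x := by
  unfold IsRec; push_neg; rfl

lemma rec_exists (f : Fin N → Fin N) (x : Fin N) :
    ∃ k, k ≤ N ∧ IsRec f (f^[k] x) := by
  have key : ∀ a b : Fin (N+1), (a:ℕ) < (b:ℕ) → f^[(a:ℕ)] x = f^[(b:ℕ)] x →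
      ∃ k, k ≤ N ∧ IsRec f (f^[k] x) := by
    intro a b hab h
    refine ⟨a, by omega, (b:ℕ) - a, by omega, ?_⟩
    rw [← Function.iterate_add_apply, Nat.sub_add_cancel (le_of_lt hab), h]
  have hni : ¬ Function.Injective (fun k : Fin (N+1) => f^[(k:ℕ)] x) := by
    intro h
    have := Fintype.card_le_of_injective _ h
    simp at this
  rw [Function.not_injective_iff] at hni
  obtain ⟨a, b, hab, hne⟩ := hni
  rcases lt_or_gt_of_ne (fun h : (a:ℕ) = (b:ℕ) => hne (Fin.ext h)) with h | h
  · exact key a b h hab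
  · exact key b a h hab.symm

lemma rec_exists' (f : Fin N → Fin N) (x : Fin N) : ∃ k, IsRec f (f^[k] x) :=
  (rec_exists f x).imp fun _ h => h.2

noncomputable def d (f : Fin N → Fin N) (x : Fin N) : ℕ := Nat.find (rec_exists' f x)

lemma d_le (f : Fin N → Fin N) (x : Fin N) : d f x ≤ N := by
  obtain ⟨k, hk, h⟩ := rec_exists f x
  exact le_trans (Nat.find_min' _ h) hk

lemma d_spec (f : Fin N → Fin N) (x : Fin N) : IsRec f (f^[d f x] x) :=
  Nat.find_spec (rec_exists' f x)

lemma d_pos (f : Fin N → Fin N) (x : Fin N) (h : ¬ IsRec f x) : 0 < d f x := by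
  rcases Nat.eq_zero_or_pos (d f x) with h' | h'
  · exact absurd (by simpa [h'] using d_spec f x) h
  · exact h'

lemma IsRec.map {f : Fin N → Fin N} {x : Fin N} (h : IsRec f x) : IsRec f (f x) := by
  obtain ⟨k, hk, hfx⟩ := h
  exact ⟨k, hk, by rw [← Function.iterate_succ_apply, Function.iterate_succ_apply', hfx]⟩

lemma IsRec.preim {f : Fin N → Fin N} {y : Fin N} (h : IsRec f y) :
    ∃ z, IsRec f z ∧ f z = y := by
  obtain ⟨k, hk, hfy⟩ := h
  refine ⟨f^[k-1] y, ⟨k, hk, ?_⟩, ?_⟩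
  · rw [← Function.iterate_add_apply]
    have : k + (k - 1) = (k - 1) + k := by omega
    rw [this, Function.iterate_add_apply, hfy]
  · have hk1 : (k - 1) + 1 = k := by omega
    rw [← Function.iterate_succ_apply' f (k-1) y]
    simp only [Nat.succ_eq_add_one, hk1, hfy]

lemma rec_inj {f : Fin N → Fin N} {y y' : Fin N} (hy : IsRec f y) (hy' : IsRec f y')
    (h : f y = f y') : y = y' := by
  obtain ⟨a, ha, hfa⟩ := hy
  obtain ⟨b, hb, hfb⟩ := hy'
  have h1 : f^[a*b] y = y := by
    rw [Function.iterate_mul]; exact Function.iterate_fixed hfa b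
  have h2 : f^[a*b] y' = y' := by
    rw [mul_comm, Function.iterate_mul]; exact Function.iterate_fixed hfb a
  have hab : a * b = (a*b - 1) + 1 := by
    have : 0 < a * b := Nat.mul_pos ha hb
    omega
  rw [hab, Function.iterate_succ_apply] at h1 h2
  rw [← h1, ← h2, h]

lemma d_f_lt {f : Fin N → Fin N} {x : Fin N} (h : ¬ IsRec f x) : d f (f x) < d f x := by
  have hp := d_pos f x h
  have h2 : IsRec f (f^[d f x - 1] (f x)) := by
    have heq : f^[d f x - 1] (f x) = f^[d f x] x := by
      rw [← Function.iterate_succ_apply]; congr 1; omega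
    rw [heq]; exact d_spec f x
  have h3 : d f (f x) ≤ d f x - 1 := Nat.find_min' (rec_exists' f (f x)) h2
  omega

lemma d_min (f : Fin N → Fin N) (x : Fin N) {k : ℕ} (h : k < d f x) :
    ¬ IsRec f (f^[k] x) := Nat.find_min (rec_exists' f x) h

lemma mem_lower {s : Finset (Fin N)} (hs : ∀ i j : Fin N, i ≤ j → j ∈ s → i ∈ s)
    (i : Fin N) : i ∈ s ↔ (i : ℕ) < s.card := by
  constructor
  · intro hi
    have hsub : Finset.Iic i ⊆ s := fun j hj => hs j i (Finset.mem_Iic.mp hj) hi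
    have := Finset.card_le_card hsub
    rw [Fin.card_Iic] at this; omega
  · intro hi
    by_contra hns
    have hsub : s ⊆ Finset.Iio i := fun j hj =>
      Finset.mem_Iio.mpr (lt_of_not_ge fun h => hns (hs i j h hj))
    have := Finset.card_le_card hsub
    rw [Fin.card_Iio] at this; omega

end DetBlockAux

open DetBlockAux

/-- canonical block form of a deterministic transition matrix.  `T` is the
matrix of a function `f` (column `j` equals the basis vector `u_{f j}`), a state is
transient iff it lies on no cycle of `f`, and `r` is the number of transient states.
After relabeling the states (by a permutation `e`) so that the transient states come
first, the relabeled matrix `T' i j = T (e i) (e j)` has block form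
`[[T₁₁, 0], [T₂₁, P]]` with `T₁₁` strictly lower-triangular, `T₂₁ ≠ 0` when `r ≠ 0`,
and `P` a permutation matrix on the recurrent states. -/
theorem deterministic_matrix_block_form {N : ℕ} (T : Matrix (Fin N) (Fin N) ℝ)
    (f : Fin N → Fin N) (hT : ∀ i j, T i j = if i = f j then 1 else 0)
    (r : ℕ)
    (hr : r = (Finset.univ.filter
      (fun i : Fin N => ∀ k : ℕ, 0 < k → f^[k] i ≠ i)).card) :
    ∃ e : Equiv.Perm (Fin N),
      -- transient states come first under the relabeling
      (∀ i : Fin N, (i : ℕ) < r ↔ (∀ k : ℕ, 0 < k → f^[k] (e i) ≠ e i)) ∧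
      -- T₁₁ is strictly lower-triangular
      (∀ i j : Fin N, (i : ℕ) < r → (j : ℕ) < r → (i : ℕ) ≤ (j : ℕ) →
        T (e i) (e j) = 0) ∧
      -- the top-right block is zero
      (∀ i j : Fin N, (i : ℕ) < r → r ≤ (j : ℕ) → T (e i) (e j) = 0) ∧
      -- T₂₁ is nonzero when r ≠ 0
      (r ≠ 0 → ∃ i j : Fin N, r ≤ (i : ℕ) ∧ (j : ℕ) < r ∧ T (e i) (e j) ≠ 0) ∧
      -- the bottom-right block is a permutation matrix
      (∃ π : Equiv.Perm {i : Fin N // r ≤ (i : ℕ)},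
        ∀ i j : {i : Fin N // r ≤ (i : ℕ)},
          T (e i.val) (e j.val) = if i = π j then 1 else 0) := by
  classical
  set g : Fin N → ℕ := fun x => if IsRec f x then N+1 else N+1 - d f x with hg
  set e := Tuple.sort g with he
  have hmono : Monotone (g ∘ e) := Tuple.monotone_sort g
  have hgle : ∀ x, g x ≤ N ↔ ¬ IsRec f x := by
    intro x
    simp only [hg]
    by_cases h : IsRec f x
    · simp only [if_pos h]
      constructor
      · intro h'; omega
      · intro h'; exact absurd h h'
    · have := d_pos f x h
      have := d_le f x
      simp only [if_neg h]
      constructor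
      · intro _; exact h
      · intro _; omega
  have hr' : r = (Finset.univ.filter fun i => ¬ IsRec f i).card := by
    rw [hr]
    congr 1
    apply Finset.filter_congr
    intro i _
    rw [not_isRec_iff]
  have hcard : (Finset.univ.filter fun i => ¬ IsRec f (e i)).card = r := by
    rw [hr']
    have hmap : (Finset.univ.filter fun i => ¬ IsRec f (e i)) =
        (Finset.univ.filter fun i => ¬ IsRec f i).map e.symm.toEmbedding := by
      ext j
      simp [Equiv.symm_apply_eq]
    rw [hmap, Finset.card_map]
  have hlower : ∀ a b : Fin N, a ≤ b →
      b ∈ (Finset.univ.filter fun i => ¬ IsRec f (e i)) →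
      a ∈ (Finset.univ.filter fun i => ¬ IsRec f (e i)) := by
    intro a b hab hb
    have h1 : g (e a) ≤ g (e b) := hmono hab
    simp only [Finset.mem_filter, Finset.mem_univ, true_and] at hb ⊢
    rw [← hgle] at hb ⊢
    omega
  have hseg : ∀ i : Fin N, (i:ℕ) < r ↔ ¬ IsRec f (e i) := by
    intro i
    have := mem_lower hlower i
    rw [hcard] at this
    simpa using this.symm
  have hrecmem : ∀ i : Fin N, r ≤ (i:ℕ) → IsRec f (e i) := by
    intro i hi
    by_contra h
    have := (hseg i).mpr h
    omega
  refine ⟨e, ?_, ?_, ?_, ?_, ?_⟩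
  · intro i
    rw [hseg i, not_isRec_iff]
  · intro i j hi hj hij
    rw [hT, if_neg]
    intro heq
    have hti := (hseg i).mp hi
    have htj := (hseg j).mp hj
    have hlt : d f (f (e j)) < d f (e j) := d_f_lt htj
    rw [← heq] at hlt
    have hm : g (e i) ≤ g (e j) := hmono hij
    simp only [hg, if_neg hti, if_neg htj] at hm
    have hdi := d_le f (e i)
    have hdj := d_le f (e j)
    omega
  · intro i j hi hj
    rw [hT, if_neg]
    intro heq
    have hti := (hseg i).mp hi
    have hrj := (hrecmem j hj).map
    rw [← heq] at hrj
    exact hti hrj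
  · intro hr0
    have hpos : 0 < (Finset.univ.filter fun i => ¬ IsRec f i).card := by
      rw [← hr']; omega
    obtain ⟨x, hx⟩ := Finset.card_pos.mp hpos
    rw [Finset.mem_filter] at hx
    have hxt : ¬ IsRec f x := hx.2
    have hm : 0 < d f x := d_pos f x hxt
    set y := f^[d f x - 1] x with hy
    have hyt : ¬ IsRec f y := d_min f x (by omega)
    have hfy : IsRec f (f y) := by
      have h1 : f y = f^[d f x] x := by
        rw [hy, ← Function.iterate_succ_apply' f (d f x - 1) x]
        congr 1
        omega
      rw [h1]; exact d_spec f x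
    refine ⟨e.symm (f y), e.symm y, ?_, ?_, ?_⟩
    · by_contra h
      push_neg at h
      have := (hseg (e.symm (f y))).mp h
      rw [Equiv.apply_symm_apply] at this
      exact this hfy
    · exact (hseg (e.symm y)).mpr (by rw [Equiv.apply_symm_apply]; exact hyt)
    · rw [hT, Equiv.apply_symm_apply, Equiv.apply_symm_apply, if_pos rfl]
      norm_num
  · have hrec : ∀ i : {i : Fin N // r ≤ (i:ℕ)}, IsRec f (e i.val) :=
      fun i => hrecmem i.val i.2
    have hmem : ∀ i : {i : Fin N // r ≤ (i:ℕ)}, r ≤ ((e.symm (f (e i.val)) : Fin N) : ℕ) := by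
      intro i
      by_contra h
      push_neg at h
      have := (hseg (e.symm (f (e i.val)))).mp h
      rw [Equiv.apply_symm_apply] at this
      exact this (hrec i).map
    set m : {i : Fin N // r ≤ (i:ℕ)} → {i : Fin N // r ≤ (i:ℕ)} :=
      fun i => ⟨e.symm (f (e i.val)), hmem i⟩ with hmdef
    have minj : Function.Injective m := by
      intro a b hab
      have h1 : e.symm (f (e a.val)) = e.symm (f (e b.val)) := congrArg Subtype.val hab
      have h2 : f (e a.val) = f (e b.val) := e.symm.injective h1
      have h3 : e a.val = e b.val := rec_inj (hrec a) (hrec b) h2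
      exact Subtype.ext (e.injective h3)
    refine ⟨Equiv.ofBijective m (Finite.injective_iff_bijective.mp minj), fun i j => ?_⟩
    rw [hT]
    have hiff : e i.val = f (e j.val) ↔ i = Equiv.ofBijective m (Finite.injective_iff_bijective.mp minj) j := by
      rw [Equiv.ofBijective_apply]
      constructor
      · intro h
        apply Subtype.ext
        show i.val = e.symm (f (e j.val))
        rw [← h, Equiv.symm_apply_apply]
      · intro h
        rw [h]
        show e (e.symm (f (e j.val))) = f (e j.val)
        rw [Equiv.apply_symm_apply]
    exact if_congr hiff rfl rfl
end

section
/- Let g be a finitely-valued, non-degenerate real random variable with log-MGF Λ(t) = log E[e^{tg}], E[g] > 0 and Λ(−1) = 0. Define r(t) := ∫₀^t Λ(τ)/τ dτ (with the integrand extended continuously by Λ'(0) at τ = 0). Then r is strictly convex on ℝ, r(0) = 0, r'(0) = E[g] > 0, r'(−1) = 0, and r(t) < 0 for all t ∈ [−1, 0). -/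
/-!
`Λ` is the cumulant generating function of a non-degenerate finite distribution, so it is strictly
convex (its second derivative is the variance of the exponentially tilted distribution) and
vanishes at `0`. Hence the secant slope `τ ↦ Λ τ / τ`, extended by `Λ'(0)` at `0` (that is,
`dslope Λ 0`), is continuous and strictly increasing; `r` is its antiderivative, so it is strictly
convex with `r' = Λ τ / τ`. The slope vanishes at `-1` because `Λ (-1) = 0`, so it is positive on
`(-1, 0]` and `r t < 0` on `[-1, 0)`.
-/

open Finset Set

theorem sq_sum_mul_lt_sum_mul_sum_mul_sq {ι : Type*} [Fintype ι] {w v : ι → ℝ}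
    (hw : ∀ i, 0 < w i) (hv : ∃ i j, v i ≠ v j) :
    (∑ i, w i * v i) ^ 2 < (∑ i, w i) * ∑ i, w i * v i ^ 2 := by
  obtain ⟨i, j, hij⟩ := hv
  set W := ∑ k, w k
  set m := (∑ k, w k * v k) / W
  have hW : 0 < W := sum_pos (fun k _ => hw k) ⟨i, mem_univ i⟩
  have hvar : 0 < ∑ k, w k * (v k - m) ^ 2 := by
    obtain ⟨k, hk⟩ : ∃ k, v k ≠ m := by
      by_contra! h
      exact hij (by rw [h i, h j])
    refine sum_pos' (fun k _ => mul_nonneg (hw k).le (sq_nonneg _)) ⟨k, mem_univ k, ?_⟩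
    exact mul_pos (hw k) (sq_pos_of_ne_zero (sub_ne_zero.mpr hk))
  have hexpand :
      W * ∑ k, w k * (v k - m) ^ 2 = W * ∑ k, w k * v k ^ 2 - (∑ k, w k * v k) ^ 2 := by
    have : ∑ k, w k * (v k - m) ^ 2 =
        ∑ k, w k * v k ^ 2 - 2 * m * ∑ k, w k * v k + m ^ 2 * W := by
      simp only [W, mul_sum, ← sum_sub_distrib, ← sum_add_distrib]
      exact sum_congr rfl fun k _ => by ring
    have hWm : W * m = ∑ k, w k * v k := mul_div_cancel₀ _ hW.ne'
    rw [this]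
    linear_combination (W * m - ∑ k, w k * v k) * hWm
  linarith [mul_pos hW hvar]

section LogSumExp

variable {Y : Type*} [Fintype Y]

theorem hasDerivAt_sum_mul_exp (c v : Y → ℝ) (t : ℝ) :
    HasDerivAt (fun t => ∑ y, c y * Real.exp (t * v y))
      (∑ y, c y * v y * Real.exp (t * v y)) t :=
  HasDerivAt.fun_sum fun y _ =>
    ((hasDerivAt_mul_const (v y)).exp.const_mul (c y)).congr_deriv (by ring)

variable {p : Y → ℝ} (hp : ∀ y, 0 < p y)
include hp

theorem sum_mul_exp_pos [Nonempty Y] (v : Y → ℝ) (t : ℝ) : 0 < ∑ y, p y * Real.exp (t * v y) :=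
  sum_pos (fun y _ => mul_pos (hp y) (Real.exp_pos _)) univ_nonempty

theorem hasDerivAt_log_sum_mul_exp [Nonempty Y] (v : Y → ℝ) (t : ℝ) :
    HasDerivAt (fun t => Real.log (∑ y, p y * Real.exp (t * v y)))
      ((∑ y, p y * v y * Real.exp (t * v y)) / ∑ y, p y * Real.exp (t * v y)) t :=
  (hasDerivAt_sum_mul_exp p v t).log (sum_mul_exp_pos hp v t).ne'

theorem strictMono_tilted_mean {v : Y → ℝ} (hv : ∃ y y', v y ≠ v y') :
    StrictMono fun t => (∑ y, p y * v y * Real.exp (t * v y)) / ∑ y, p y * Real.exp (t * v y) := by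
  have : Nonempty Y := ⟨hv.choose⟩
  refine strictMono_of_hasDerivAt_pos
    (fun t => (hasDerivAt_sum_mul_exp (fun y => p y * v y) v t).div
      (hasDerivAt_sum_mul_exp p v t) (sum_mul_exp_pos hp v t).ne') fun t => ?_
  have hcs := sq_sum_mul_lt_sum_mul_sum_mul_sq (w := fun y => p y * Real.exp (t * v y))
    (fun y => mul_pos (hp y) (Real.exp_pos _)) hv
  have h1 : ∑ y, p y * v y * Real.exp (t * v y) = ∑ y, p y * Real.exp (t * v y) * v y :=
    sum_congr rfl fun y _ => by ring
  have h2 : ∑ y, p y * v y * v y * Real.exp (t * v y) =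
      ∑ y, p y * Real.exp (t * v y) * v y ^ 2 :=
    sum_congr rfl fun y _ => by ring
  rw [h1, h2]
  exact div_pos (by linarith) (pow_pos (sum_mul_exp_pos hp v t) 2)

theorem strictConvexOn_log_sum_mul_exp {v : Y → ℝ} (hv : ∃ y y', v y ≠ v y') :
    StrictConvexOn ℝ univ fun t => Real.log (∑ y, p y * Real.exp (t * v y)) := by
  have : Nonempty Y := ⟨hv.choose⟩
  have hderiv := fun t => hasDerivAt_log_sum_mul_exp hp v t
  refine StrictMono.strictConvexOn_univ_of_deriv
    (continuous_iff_continuousAt.mpr fun t => (hderiv t).continuousAt) ?_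
  rw [funext fun t => (hderiv t).deriv]
  exact strictMono_tilted_mean hp hv

end LogSumExp

theorem StrictConvexOn.strictMono_dslope {f : ℝ → ℝ} (hf : StrictConvexOn ℝ univ f) {a : ℝ}
    (hfa : DifferentiableAt ℝ f a) : StrictMono (dslope f a) := by
  intro x y hxy
  rcases eq_or_ne x a with rfl | hxa
  · rw [dslope_same, dslope_of_ne f hxy.ne']
    exact hf.deriv_lt_slope trivial trivial hxy hfa
  rcases eq_or_ne y a with rfl | hya
  · rw [dslope_same, dslope_of_ne f hxy.ne, slope_comm]
    exact hf.slope_lt_deriv trivial trivial hxy hfa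
  rw [dslope_of_ne f hxa, dslope_of_ne f hya, slope_def_field, slope_def_field]
  exact hf.secant_strict_mono trivial trivial trivial hxa hya hxy

theorem Differentiable.continuous_dslope {f : ℝ → ℝ} (hf : Differentiable ℝ f) (a : ℝ) :
    Continuous (dslope f a) :=
  continuousOn_univ.mp
    ((continuousOn_dslope Filter.univ_mem).mpr ⟨hf.continuous.continuousOn, hf a⟩)

theorem dslope_zero_eq_div {f : ℝ → ℝ} (hf : f 0 = 0) {τ : ℝ} (hτ : τ ≠ 0) :
    dslope f 0 τ = f τ / τ := by
  rw [dslope_of_ne f hτ, slope_def_field, hf, sub_zero, sub_zero]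

theorem StrictMono.strictConvexOn_integral {f : ℝ → ℝ} (hf : StrictMono f) (hc : Continuous f)
    (a : ℝ) : StrictConvexOn ℝ univ fun t => ∫ τ in a..t, f τ :=
  StrictMono.strictConvexOn_univ_of_deriv
    (continuous_iff_continuousAt.mpr fun t =>
      (hc.integral_hasStrictDerivAt a t).hasDerivAt.continuousAt)
    (by rwa [funext (hc.deriv_integral _ a)])

theorem StrictMono.integral_pos {f : ℝ → ℝ} (hf : StrictMono f) (hc : Continuous f) {a b : ℝ}
    (hab : a < b) (ha : 0 ≤ f a) : 0 < ∫ τ in a..b, f τ :=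
  intervalIntegral.intervalIntegral_pos_of_pos_on (hc.intervalIntegrable a b)
    (fun _ hx => ha.trans_lt (hf hx.1)) hab

/-- let `g` be finitely valued and non-degenerate with log-MGF
`Λ(t) = log ∑_y p(y) e^{t v(y)}`, mean `E[g] > 0` and `Λ(−1) = 0`.  Define
`r(t) = ∫₀^t Λ(τ)/τ dτ` (the integrand extended by `Λ'(0)` at `τ = 0`).  Then `r` is
strictly convex, `r(0) = 0`, `r'(0) = E[g] > 0`, `r'(−1) = 0`, and `r(t) < 0` on
`[−1, 0)`. -/
theorem r_function_properties {Y : Type*} [Fintype Y] [Nonempty Y]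
    (p : Y → ℝ) (hp : ∀ y, 0 < p y) (hps : ∑ y, p y = 1)
    (v : Y → ℝ) (hv : ∃ y y' : Y, v y ≠ v y')
    (Λ : ℝ → ℝ)
    (hΛ : ∀ t, Λ t = Real.log (∑ y, p y * Real.exp (t * v y)))
    (hmean : 0 < ∑ y, p y * v y)
    (hΛneg1 : Λ (-1) = 0)
    (r : ℝ → ℝ)
    (hr : ∀ t, r t = ∫ τ in (0 : ℝ)..t,
      (if τ = 0 then deriv Λ 0 else Λ τ / τ)) :
    StrictConvexOn ℝ Set.univ r ∧
    r 0 = 0 ∧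
    deriv r 0 = ∑ y, p y * v y ∧
    0 < deriv r 0 ∧
    deriv r (-1) = 0 ∧
    (∀ t ∈ Set.Ico (-1 : ℝ) 0, r t < 0) := by
  have hΛfun : Λ = fun t => Real.log (∑ y, p y * Real.exp (t * v y)) := funext hΛ
  have hΛ0 : Λ 0 = 0 := by simp [hΛ, hps]
  have hderivΛ : deriv Λ 0 = ∑ y, p y * v y := by
    simpa [hΛfun, hps] using (hasDerivAt_log_sum_mul_exp hp v 0).deriv
  have hdiff : Differentiable ℝ Λ :=
    hΛfun ▸ fun t => (hasDerivAt_log_sum_mul_exp hp v t).differentiableAt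
  obtain rfl : r = fun t => ∫ τ in (0 : ℝ)..t, dslope Λ 0 τ := by
    refine funext fun t => (hr t).trans (intervalIntegral.integral_congr fun τ _ => ?_)
    by_cases hτ : τ = 0
    · simp [hτ]
    · simp only [hτ, if_false, dslope_zero_eq_div hΛ0 hτ]
  have hmono : StrictMono (dslope Λ 0) :=
    (hΛfun ▸ strictConvexOn_log_sum_mul_exp hp hv).strictMono_dslope (hdiff 0)
  have hcont : Continuous (dslope Λ 0) := hdiff.continuous_dslope 0
  have hf0 : dslope Λ 0 0 = ∑ y, p y * v y := by rw [dslope_same, hderivΛ]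
  have hfneg1 : dslope Λ 0 (-1) = 0 := by
    rw [dslope_zero_eq_div hΛ0 (by norm_num : (-1 : ℝ) ≠ 0), hΛneg1, zero_div]
  rw [show deriv (fun t => ∫ τ in (0 : ℝ)..t, dslope Λ 0 τ) = dslope Λ 0 from
    funext (hcont.deriv_integral _ 0)]
  refine ⟨hmono.strictConvexOn_integral hcont 0, intervalIntegral.integral_same, hf0,
    hf0 ▸ hmean, hfneg1, fun t ht => ?_⟩
  show ∫ τ in (0 : ℝ)..t, dslope Λ 0 τ < 0
  rw [intervalIntegral.integral_symm, neg_lt_zero]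
  exact hmono.integral_pos hcont ht.2 (hfneg1.symm.le.trans (hmono.monotone ht.1))
end

section
/- Let f: ℝ → ℝ be twice continuously differentiable with f(0) = 0, and let g(t) := f(t)/t (extended continuously by f'(0) at t = 0), assumed continuously differentiable on ℝ. Fix t < 0, constants c > 0 and μ ∈ (0,1), and set τ_h := c(1−μ)^h t for h ≥ 0. Then for any positive integer H, Σ_{h=0}^{H−1} f(τ_h) ≤ (1/μ)[ ∫_{c(1−μ)^H t}^{c t} g(τ) dτ + (μ/(2−μ)) · h₁(ct) ], where h₁(s) := (max_{τ ∈ [s,0]} |g'(τ)|) · s²/2. -/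
/-!
Since `τ_{h+1} - τ_h = -μ τ_h` and `f(τ_h) = τ_h g(τ_h)`, the quantity `μ f(τ_h)` is minus the
left-endpoint rectangle `(τ_{h+1} - τ_h) g(τ_h)`. Expanding `g` to first order at `τ_h`, this
rectangle underestimates `∫_{τ_h}^{τ_{h+1}} g` by at most `M (τ_{h+1} - τ_h)² / 2 = M μ² τ_h² / 2`,
with `M` the maximum of `|g'|` on `[ct, 0]`. The integrals telescope, and
`∑ τ_h² ≤ (ct)² ∑ (1 - μ)^{2h} ≤ (ct)² / (μ (2 - μ))`.
-/

open Set Finset intervalIntegral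

section LeftRiemannSum

variable {g : ℝ → ℝ} {M : ℝ}

theorem integral_le_mul_add_of_deriv_le (hg : Differentiable ℝ g) {a b : ℝ} (hab : a ≤ b)
    (hM : ∀ x ∈ Icc a b, deriv g x ≤ M) :
    ∫ x in a..b, g x ≤ (b - a) * g a + M / 2 * (b - a) ^ 2 := by
  have hmono : ∫ x in a..b, (g x - g a) ≤ ∫ x in a..b, M * (x - a) :=
    integral_mono_on hab ((hg.continuous.sub continuous_const).intervalIntegrable _ _)
      ((by fun_prop : Continuous fun x => M * (x - a)).intervalIntegrable _ _)
      fun x hx => (convex_Icc a b).image_sub_le_mul_sub_of_deriv_le hg.continuous.continuousOn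
        hg.differentiableOn (fun z hz => hM z (interior_subset hz)) a (left_mem_Icc.2 hab) x hx hx.1
  rw [integral_sub (hg.continuous.intervalIntegrable _ _) intervalIntegrable_const,
    integral_const_mul, integral_sub intervalIntegrable_id intervalIntegrable_const,
    integral_id, integral_const, integral_const, smul_eq_mul, smul_eq_mul] at hmono
  linarith

theorem integral_le_sum_mul_add_of_deriv_le (hg : Differentiable ℝ g) {τ : ℕ → ℝ}
    (hτ : Monotone τ) (H : ℕ) (hM : ∀ x ∈ Icc (τ 0) (τ H), deriv g x ≤ M) :
    ∫ x in τ 0..τ H, g x ≤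
      ∑ h ∈ range H, (τ (h + 1) - τ h) * g (τ h) +
        M / 2 * ∑ h ∈ range H, (τ (h + 1) - τ h) ^ 2 := by
  rw [← sum_integral_adjacent_intervals fun _ _ => hg.continuous.intervalIntegrable _ _, mul_sum,
    ← sum_add_distrib]
  refine sum_le_sum fun h hh => integral_le_mul_add_of_deriv_le hg (hτ h.le_succ) ?_
  have hH : h + 1 ≤ H := Finset.mem_range.1 hh
  exact fun x hx => hM x ⟨(hτ h.zero_le).trans hx.1, hx.2.trans (hτ hH)⟩

end LeftRiemannSum

theorem sum_sq_one_sub_pow_le {μ : ℝ} (hμ : μ ∈ Ioo (0 : ℝ) 1) (H : ℕ) :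
    ∑ h ∈ range H, ((1 - μ) ^ h) ^ 2 ≤ 1 / (μ * (2 - μ)) := by
  obtain ⟨hμ0, hμ1⟩ := hμ
  have hgeom := geom_sum_Ico_le_of_lt_one (x := (1 - μ) ^ 2) (m := 0) (n := H) (by positivity)
    (by nlinarith)
  rw [← range_eq_Ico, pow_zero] at hgeom
  simp_rw [← pow_mul, mul_comm _ 2, pow_mul] at hgeom ⊢
  exact hgeom.trans_eq (by ring)

theorem sum_sq_geometric_step_le {μ : ℝ} (hμ : μ ∈ Ioo (0 : ℝ) 1) (s : ℝ) (H : ℕ) :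
    ∑ h ∈ range H, (s * (1 - μ) ^ (h + 1) - s * (1 - μ) ^ h) ^ 2 ≤ μ / (2 - μ) * s ^ 2 := calc
  _ = μ ^ 2 * s ^ 2 * ∑ h ∈ range H, ((1 - μ) ^ h) ^ 2 := by
    rw [mul_sum]
    exact sum_congr rfl fun h _ => by ring
  _ ≤ μ ^ 2 * s ^ 2 * (1 / (μ * (2 - μ))) := by
    gcongr
    exact sum_sq_one_sub_pow_le hμ H
  _ = μ / (2 - μ) * s ^ 2 := by
    field_simp [hμ.1.ne', (by linarith [hμ.2] : (2 : ℝ) - μ ≠ 0)]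

theorem abs_deriv_le_sSup_image {g : ℝ → ℝ} (hg : ContDiff ℝ 1 g) {s : Set ℝ} (hs : IsCompact s)
    {x : ℝ} (hx : x ∈ s) : |deriv g x| ≤ sSup ((fun τ => |deriv g τ|) '' s) :=
  le_csSup (hs.image (hg.continuous_deriv le_rfl).abs).bddAbove (mem_image_of_mem _ hx)

theorem geometric_taylor_sum_bound_general
    (f g : ℝ → ℝ)
    (hg : ∀ t : ℝ, t ≠ 0 → g t = f t / t)
    (hgC1 : ContDiff ℝ 1 g)
    (t : ℝ) (ht : t < 0) (c : ℝ) (hc : 0 < c)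
    (μ : ℝ) (hμ : μ ∈ Set.Ioo (0 : ℝ) 1) :
    ∀ H : ℕ, 1 ≤ H →
      ∑ h ∈ Finset.range H, f (c * (1 - μ) ^ h * t) ≤
        (1 / μ) * ((∫ τ in (c * (1 - μ) ^ H * t)..(c * t), g τ) +
          (μ / (2 - μ)) *
            ((sSup ((fun τ => |deriv g τ|) '' Set.Icc (c * t) 0)) *
              (c * t) ^ 2 / 2)) := by
  intro H _
  set M := sSup ((fun τ => |deriv g τ|) '' Icc (c * t) 0)
  set τ : ℕ → ℝ := fun h => c * (1 - μ) ^ h * t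
  have hτ_mono : Monotone τ := fun m n hmn => mul_le_mul_of_nonpos_right
    (mul_le_mul_of_nonneg_left (pow_le_pow_of_le_one (by linarith [hμ.2]) (by linarith [hμ.1]) hmn)
      hc.le) ht.le
  have hτ_neg (h : ℕ) : τ h < 0 :=
    mul_neg_of_pos_of_neg (mul_pos hc (pow_pos (by linarith [hμ.2]) h)) ht
  have hτ_zero : τ 0 = c * t := by simp only [τ, pow_zero, mul_one]
  have hM0 : 0 ≤ M := (abs_nonneg _).trans
    (abs_deriv_le_sSup_image hgC1 isCompact_Icc ⟨le_rfl, (hτ_zero ▸ hτ_neg 0).le⟩)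
  have hriemann := integral_le_sum_mul_add_of_deriv_le (hgC1.differentiable one_ne_zero) hτ_mono H
    fun x hx => (le_abs_self _).trans
      (abs_deriv_le_sSup_image hgC1 isCompact_Icc ⟨hτ_zero ▸ hx.1, hx.2.trans (hτ_neg H).le⟩)
  have hrect (h : ℕ) : (τ (h + 1) - τ h) * g (τ h) = -(μ * f (τ h)) := by
    rw [hg _ (hτ_neg h).ne]
    field_simp [(hτ_neg h).ne]
    ring
  have hsteps : ∑ h ∈ range H, (τ (h + 1) - τ h) ^ 2 ≤ μ / (2 - μ) * (c * t) ^ 2 :=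
    (sum_congr rfl fun h _ => by simp only [τ]; ring).trans_le (sum_sq_geometric_step_le hμ _ H)
  rw [← neg_le_neg_iff, ← integral_symm, hτ_zero] at hriemann
  simp only [hrect, sum_neg_distrib, ← mul_sum] at hriemann
  rw [div_mul_eq_mul_div, one_mul, le_div_iff₀ hμ.1, mul_comm]
  linarith [mul_le_mul_of_nonneg_left hsteps (by positivity : (0 : ℝ) ≤ M / 2)]

/-- Lemma on geometric sums of `f(τ_h)`: for `f ∈ C²` with `f(0) = 0`,
`g(t) = f(t)/t` (extended by `f'(0)` at `0`) assumed `C¹`, `t < 0`, `c > 0`,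
`μ ∈ (0,1)` and `τ_h = c(1−μ)^h t`, one has for every `H ≥ 1`
`∑_{h<H} f(τ_h) ≤ (1/μ)[∫_{c(1−μ)^H t}^{c t} g + (μ/(2−μ)) h₁(ct)]`, where
`h₁(s) = (max_{τ∈[s,0]} |g'(τ)|) s²/2`. -/
theorem geometric_taylor_sum_bound
    (f g : ℝ → ℝ)
    (hf : ContDiff ℝ 2 f) (hf0 : f 0 = 0)
    (hg : ∀ t : ℝ, t ≠ 0 → g t = f t / t) (hg0 : g 0 = deriv f 0)
    (hgC1 : ContDiff ℝ 1 g)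
    (t : ℝ) (ht : t < 0) (c : ℝ) (hc : 0 < c)
    (μ : ℝ) (hμ : μ ∈ Set.Ioo (0 : ℝ) 1) :
    ∀ H : ℕ, 1 ≤ H →
      ∑ h ∈ Finset.range H, f (c * (1 - μ) ^ h * t) ≤
        (1 / μ) * ((∫ τ in (c * (1 - μ) ^ H * t)..(c * t), g τ) +
          (μ / (2 - μ)) *
            ((sSup ((fun τ => |deriv g τ|) '' Set.Icc (c * t) 0)) *
              (c * t) ^ 2 / 2)) :=
  geometric_taylor_sum_bound_general f g hg hgC1 t ht c hc μ hμ
end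

section
/- Let U_k := diag(d_k) T diag(d_{k−1}) T ⋯ diag(d_1) T, a product of k factors of the form diag(d_i) T, where T = [[T₁₁,0],[T₂₁,P]] is a deterministic transition matrix with strictly lower-triangular T₁₁ ∈ ℝ^{r×r} of nilpotency index ℓ, and each d_i ∈ ℝ^N. Then for k ≥ ℓ, the top r rows of U_k are identically zero, i.e., U_k has block form [[0,0],[*,*]]. In particular, for any initial vector π₀ ∈ ℝ^N, the first r entries of U_k π₀ vanish for k ≥ ℓ. -/
/-- let `U_k = diag(d_k) T ⋯ diag(d_1) T` where `T` is a deterministic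
transition matrix of block form `[[T₁₁, 0], [T₂₁, P]]` with strictly lower-triangular
transient block `T₁₁` of nilpotency index `ℓ`.  Then for `k ≥ ℓ` the top `r` rows of
`U_k` vanish; in particular the first `r` entries of `U_k π₀` vanish. -/
theorem diag_product_top_rows_vanish
    {N r : ℕ} (hrN : r ≤ N)
    (T : Matrix (Fin N) (Fin N) ℝ)
    (f : Fin N → Fin N) (hT : ∀ i j, T i j = if i = f j then 1 else 0)
    -- T₁₁ is strictly lower-triangular
    (htri : ∀ i j : Fin N, (i : ℕ) < r → (j : ℕ) < r → (i : ℕ) ≤ (j : ℕ) →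
      T i j = 0)
    -- the top-right block is zero
    (htr : ∀ i j : Fin N, (i : ℕ) < r → r ≤ (j : ℕ) → T i j = 0)
    -- T₁₁ has nilpotency index ℓ
    (ℓ : ℕ)
    (hnil : (Matrix.of fun i j : Fin r =>
      T (Fin.castLE hrN i) (Fin.castLE hrN j)) ^ ℓ = 0)
    (d : ℕ → Fin N → ℝ)
    (U : ℕ → Matrix (Fin N) (Fin N) ℝ)
    (hU0 : U 0 = 1)
    (hUsucc : ∀ k : ℕ, U (k + 1) = Matrix.diagonal (d (k + 1)) * T * U k) :
    ∀ k : ℕ, ℓ ≤ k →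
      (∀ i j : Fin N, (i : ℕ) < r → U k i j = 0) ∧
      (∀ π₀ : Fin N → ℝ, ∀ i : Fin N, (i : ℕ) < r → (U k).mulVec π₀ i = 0) := by
  set T11 : Matrix (Fin r) (Fin r) ℝ := Matrix.of fun i j : Fin r =>
      T (Fin.castLE hrN i) (Fin.castLE hrN j) with hT11
  -- (A): nonzero entries of U k lie on the orbit of f
  have keyA : ∀ k (i j : Fin N), U k i j ≠ 0 → i = f^[k] j := by
    intro k
    induction k with
    | zero =>
      intro i j h
      rw [hU0] at h
      by_contra hij
      exact h (Matrix.one_apply_ne hij)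
    | succ k ih =>
      intro i j h
      rw [hUsucc, Matrix.mul_apply] at h
      obtain ⟨m, _, hne⟩ := Finset.exists_ne_zero_of_sum_ne_zero h
      have hdT : (Matrix.diagonal (d (k + 1)) * T) i m = d (k + 1) i * T i m :=
        Matrix.diagonal_mul _ _ _ _
      rw [hdT] at hne
      have hTim : T i m ≠ 0 := fun h0 => hne (by rw [h0]; ring)
      have hUm : U k m j ≠ 0 := fun h0 => hne (by rw [h0]; ring)
      have him : i = f m := by
        by_contra hc
        rw [hT, if_neg hc] at hTim
        exact hTim rfl
      rw [him, ih m j hUm, ← Function.iterate_succ_apply' f k j]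
  -- (B): preimages of transient states under f are transient
  have keyB : ∀ m : Fin N, ((f m : Fin N) : ℕ) < r → (m : ℕ) < r := by
    intro m hm
    by_contra hge
    push_neg at hge
    have h0 := htr (f m) m hm hge
    rw [hT, if_pos rfl] at h0
    exact one_ne_zero h0
  -- the whole orbit is transient if its endpoint is
  have keyAll : ∀ k (j : Fin N), ((f^[k] j : Fin N) : ℕ) < r →
      ∀ s, s ≤ k → ((f^[s] j : Fin N) : ℕ) < r := by
    intro k
    induction k with
    | zero =>
      intro j hj s hs
      have : s = 0 := Nat.le_zero.mp hs
      subst this; exact hj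
    | succ k ih =>
      intro j hj s hs
      have hk : ((f^[k] j : Fin N) : ℕ) < r := by
        apply keyB
        rw [← Function.iterate_succ_apply' f k j]
        exact hj
      by_cases h : s ≤ k
      · exact ih j hk s h
      · have : s = k + 1 := by omega
        subst this; exact hj
  -- (C): power of T11 has a 1 on the orbit
  have keyC : ∀ k (j : Fin N) (hall : ∀ s, s ≤ k → ((f^[s] j : Fin N) : ℕ) < r),
      (T11 ^ k) ⟨((f^[k] j : Fin N) : ℕ), hall k le_rfl⟩
        ⟨(j : ℕ), hall 0 (Nat.zero_le _)⟩ = 1 := by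
    intro k
    induction k with
    | zero =>
      intro j hall
      rw [pow_zero]
      have : (⟨((f^[0] j : Fin N) : ℕ), hall 0 le_rfl⟩ : Fin r)
          = ⟨(j : ℕ), hall 0 (Nat.zero_le _)⟩ := by
        ext; simp
      rw [this, Matrix.one_apply_eq]
    | succ k ih =>
      intro j hall
      have hfj : ((f j : Fin N) : ℕ) < r := by
        have := hall 1 (by omega)
        simpa using this
      have hstep : ∀ m : Fin r,
          T11 m ⟨(j : ℕ), hall 0 (Nat.zero_le _)⟩
            = if m = ⟨((f j : Fin N) : ℕ), hfj⟩ then 1 else 0 := by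
        intro m
        have hcj : Fin.castLE hrN (⟨(j : ℕ), hall 0 (Nat.zero_le _)⟩ : Fin r) = j := by
          ext; simp
        show T (Fin.castLE hrN m) (Fin.castLE hrN ⟨(j : ℕ), hall 0 (Nat.zero_le _)⟩) = _
        rw [hcj, hT]
        by_cases hm : m = ⟨((f j : Fin N) : ℕ), hfj⟩
        · subst hm
          rw [if_pos (by ext; simp), if_pos rfl]
        · rw [if_neg hm, if_neg]
          intro hc
          exact hm (by ext; simpa [Fin.ext_iff] using congrArg Fin.val hc)
      rw [pow_succ, Matrix.mul_apply]
      have hsum : ∀ m : Fin r,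
          (T11 ^ k) ⟨((f^[k+1] j : Fin N) : ℕ), hall (k+1) le_rfl⟩ m *
            T11 m ⟨(j : ℕ), hall 0 (Nat.zero_le _)⟩
          = if m = ⟨((f j : Fin N) : ℕ), hfj⟩ then
              (T11 ^ k) ⟨((f^[k+1] j : Fin N) : ℕ), hall (k+1) le_rfl⟩ m else 0 := by
        intro m
        rw [hstep m]
        by_cases hm : m = ⟨((f j : Fin N) : ℕ), hfj⟩ <;> simp [hm]
      rw [Finset.sum_congr rfl fun m _ => hsum m, Finset.sum_ite_eq' _ _ _]
      rw [if_pos (Finset.mem_univ _)]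
      have hall' : ∀ s, s ≤ k → ((f^[s] (f j) : Fin N) : ℕ) < r := by
        intro s hs
        rw [← Function.iterate_succ_apply f s j]
        exact hall (s + 1) (by omega)
      have := ih (f j) hall'
      have hidx : (⟨((f^[k+1] j : Fin N) : ℕ), hall (k+1) le_rfl⟩ : Fin r)
          = ⟨((f^[k] (f j) : Fin N) : ℕ), hall' k le_rfl⟩ := by
        ext
        simp [Function.iterate_succ_apply]
      rw [hidx]
      exact this
  -- main argument
  intro k hk
  have part1 : ∀ i j : Fin N, (i : ℕ) < r → U k i j = 0 := by
    intro i j hi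
    by_contra hne
    have hij := keyA k i j hne
    have hik : ((f^[k] j : Fin N) : ℕ) < r := hij ▸ hi
    have hall := keyAll k j hik
    have h1 := keyC k j hall
    have hz : T11 ^ k = 0 := by
      have : T11 ^ k = T11 ^ (k - ℓ) * T11 ^ ℓ := by
        rw [← pow_add]
        congr 1
        omega
      rw [this, hnil, mul_zero]
    rw [hz] at h1
    simp at h1
  refine ⟨part1, ?_⟩
  intro π₀ i hi
  rw [Matrix.mulVec, dotProduct]
  apply Finset.sum_eq_zero
  intro j _
  rw [part1 i j hi, zero_mul]
end
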